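/- Let R be a commutative ring, S a multiplicative subset, and P an R-module. If Ext¹_R(P, M) is u-S-torsion for every R-module M, then Extⁿ_R(P, M) is u-S-torsion for every R-module M and every n ≥ 1. -/

import Mathlib

open CategoryTheory

universe u

def IsUSTorsionMod {R : Type u} [CommRing R] (S : Submonoid R) (X : ModuleCat.{u} R) : Prop :=
  ∃ s ∈ S, ∀ x : X, s • x = 0

def IsUSTorsion {R : Type u} [CommRing R] (S : Submonoid R) (T : Type u)
    [AddCommGroup T] [Module R T] : Prop :=
  ∃ s ∈ S, ∀ x : T, s • x = 0

noncomputable def ext (R : Type u) [CommRing R] (n : ℕ) (P M : ModuleCat.{u} R) :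
    ModuleCat.{u} R :=
  ((Ext R (ModuleCat.{u} R) n).obj (Opposite.op P)).obj M

def IsUSProjective {R : Type u} [CommRing R] (S : Submonoid R) (P : Type u)
    [AddCommGroup P] [Module R P] : Prop :=
  ∀ M : ModuleCat.{u} R, IsUSTorsionMod S (ext R 1 (ModuleCat.of R P) M)

def IsUSInjective {R : Type u} [CommRing R] (S : Submonoid R) (E : Type u)
    [AddCommGroup E] [Module R E] : Prop :=
  ∀ M : ModuleCat.{u} R, IsUSTorsionMod S (ext R 1 M (ModuleCat.of R E))

/-!
Let `Q → P` be a projective resolution and `K = ker (Q₀ → P)`. The differential `d₁ : Q₁ → K`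
is a cocycle whose class in `Ext¹(P, K)` is killed by some `s ∈ S`, i.e. `s • d₁ = g ∘ d₁` for
some `g : Q₀ → K`; then `s • 𝟙 - ι ∘ g` vanishes on `K` and descends to `θ : P → Q₀` with
`π ∘ θ = s • 𝟙_P`. Then `s • 𝟙_Q` and the chain map `Q → P → Q₀` both lift
`s • 𝟙_P`, so they are homotopic; the second vanishes in positive degrees, so `s • 𝟙` is
null-homotopic there and the same `s` kills `Extⁿ(P, M)` for every `n ≥ 1` and every `M`.
-/

open Limits Opposite

universe w v

section

variable {R : Type w} [Ring R]

lemma CategoryTheory.Iso.forall_smul_eq_zero_iff {X Y : ModuleCat.{v} R} (e : X ≅ Y) (s : R) :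
    (∀ x : X, s • x = 0) ↔ ∀ y : Y, s • y = 0 := by
  refine ⟨fun h y => ?_, fun h x => ?_⟩
  · simpa using congr(e.hom $(h (e.inv y)))
  · simpa using congr(e.inv $(h (e.hom x)))

lemma CategoryTheory.ShortComplex.moduleCat_forall_smul_homology_eq_zero_iff
    (T : ShortComplex (ModuleCat.{v} R)) (s : R) :
    (∀ x : T.homology, s • x = 0) ↔ ∀ z : T.X₂, T.g z = 0 → ∃ y, T.f y = s • z := by
  rw [T.moduleCatHomologyIso.forall_smul_eq_zero_iff]
  constructor
  · intro h z hz
    obtain ⟨y, hy⟩ := (Submodule.Quotient.mk_eq_zero _).1 (h (Submodule.Quotient.mk ⟨z, hz⟩))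
    exact ⟨y, congrArg Subtype.val hy⟩
  · intro h x
    obtain ⟨⟨z, hz⟩, rfl⟩ := Submodule.Quotient.mk_surjective _ x
    obtain ⟨y, hy⟩ := h z hz
    exact (Submodule.Quotient.mk_eq_zero _).2 ⟨y, Subtype.ext hy⟩

namespace CategoryTheory.ProjectiveResolution

variable {C : Type u} [Category.{v} C] [Abelian C] [Linear R C] [EnoughProjectives C]
  {X : C} (Q : ProjectiveResolution X)

lemma forall_smul_ext_succ_eq_zero_iff (m : ℕ) (Y : C) (s : R) :
    (∀ x : ((Ext R C (m + 1)).obj (op X)).obj Y, s • x = 0) ↔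
      ∀ f : Q.complex.X (m + 1) ⟶ Y, Q.complex.d (m + 2) (m + 1) ≫ f = 0 →
        ∃ g : Q.complex.X m ⟶ Y, Q.complex.d (m + 1) m ≫ g = s • f := by
  rw [(Q.isoExt (m + 1) Y ≪≫ (Q.complex.linearYonedaObj R Y).homologyIsoSc' m (m + 1) (m + 2)
    (by simp) (by simp)).forall_smul_eq_zero_iff,
    ShortComplex.moduleCat_forall_smul_homology_eq_zero_iff]
  rfl

theorem exists_comp_π_eq_smul_id {s : R}
    (hs : ∀ x : ((Ext R C 1).obj (op X)).obj (kernel (Q.π.f 0)), s • x = 0) :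
    ∃ θ : X ⟶ Q.complex.X 0, θ ≫ Q.π.f 0 = s • 𝟙 X := by
  -- `Q.π.f 0` lands in `((single₀ C).obj X).X 0`, which is `X` only after unfolding;
  -- `p` is the same map typed into `X`, so that rewriting with it type-checks.
  let p : Q.complex.X 0 ⟶ X := Q.π.f 0
  have : Epi p := inferInstanceAs (Epi (Q.π.f 0))
  have hιp : kernel.ι (Q.π.f 0) ≫ p = 0 := kernel.condition _
  let κ := kernel.lift (Q.π.f 0) (Q.complex.d 1 0) Q.complex_d_comp_π_f_zero
  have hκ : Q.complex.d 2 1 ≫ κ = 0 := by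
    rw [← cancel_mono (kernel.ι (Q.π.f 0)), Category.assoc, kernel.lift_ι, Q.complex.d_comp_d,
      zero_comp]
  obtain ⟨g, hg⟩ := (Q.forall_smul_ext_succ_eq_zero_iff 0 _ s).1 hs κ hκ
  obtain ⟨θ, hθ⟩ : ∃ θ : X ⟶ Q.complex.X 0, p ≫ θ = s • 𝟙 _ - g ≫ kernel.ι (Q.π.f 0) :=
    ⟨_, (CokernelCofork.IsColimit.desc' Q.isColimitCokernelCofork _ (by
      rw [Preadditive.comp_sub, ← Category.assoc, hg, Linear.comp_smul, Category.comp_id,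
        Linear.smul_comp, kernel.lift_ι, sub_self])).2⟩
  have hθp : p ≫ θ ≫ p = p ≫ (s • 𝟙 X) := by
    rw [reassoc_of% hθ, Preadditive.sub_comp, Category.assoc, hιp, comp_zero, sub_zero,
      Linear.smul_comp, Category.id_comp, Linear.comp_smul, Category.comp_id]
  exact ⟨θ, (cancel_epi p).1 hθp⟩

noncomputable def smulHomotopy {s : R} {θ : X ⟶ Q.complex.X 0} (hθ : θ ≫ Q.π.f 0 = s • 𝟙 X) :
    Homotopy (s • 𝟙 Q.complex) (Q.π ≫ (ChainComplex.fromSingle₀Equiv _ _).symm θ) :=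
  liftHomotopy (s • 𝟙 X) _ _
    (by
      ext
      simp only [HomologicalComplex.comp_f, HomologicalComplex.smul_f_apply, Linear.smul_comp,
        Category.id_comp, ChainComplex.single₀_map_f_zero]
      exact ((Linear.comp_smul _ X X (Q.π.f 0) s (𝟙 X)).trans
        (congrArg (s • ·) (Category.comp_id _))).symm)
    (by ext; simpa using congrArg (Q.π.f 0 ≫ ·) hθ)

theorem forall_smul_ext_succ_eq_zero_of_homotopy {s : R} {φ : Q.complex ⟶ Q.complex} (m : ℕ)
    (H : Homotopy (s • 𝟙 Q.complex) φ) (hφ : φ.f (m + 1) = 0) (Y : C) :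
    ∀ x : ((Ext R C (m + 1)).obj (op X)).obj Y, s • x = 0 := by
  have hcomm := H.comm (m + 1)
  rw [dNext_eq _ (show (ComplexShape.down ℕ).Rel (m + 1) m by simp),
    prevD_eq _ (show (ComplexShape.down ℕ).Rel (m + 2) (m + 1) by simp), hφ, add_zero] at hcomm
  refine (Q.forall_smul_ext_succ_eq_zero_iff m Y s).2 fun f hf => ⟨H.hom m (m + 1) ≫ f, ?_⟩
  calc Q.complex.d (m + 1) m ≫ H.hom m (m + 1) ≫ f
      = (s • 𝟙 Q.complex).f (m + 1) ≫ f := by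
        rw [hcomm, Preadditive.add_comp, Category.assoc, Category.assoc, hf, comp_zero, add_zero]
    _ = s • f := by simp

end CategoryTheory.ProjectiveResolution

end

theorem uS_projective_ext_n_torsion
    {R : Type u} [CommRing R] (S : Submonoid R)
    (P : ModuleCat.{u} R)
    (h : ∀ M : ModuleCat.{u} R, IsUSTorsionMod S (ext R 1 P M)) :
    ∀ (n : ℕ), 1 ≤ n → ∀ M : ModuleCat.{u} R, IsUSTorsionMod S (ext R n P M) := by
  let Q := ProjectiveResolution.of P
  obtain ⟨s, hsS, hs⟩ := h (kernel (Q.π.f 0))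
  obtain ⟨θ, hθ⟩ := Q.exists_comp_π_eq_smul_id hs
  rintro (_ | m) hm M
  · omega
  · exact ⟨s, hsS, Q.forall_smul_ext_succ_eq_zero_of_homotopy m (Q.smulHomotopy hθ) (by simp) M⟩
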